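/- A prelambda congruence ~ is a lambda congruence if and only if it satisfies extensionality for abstractions: for all terms A, B and variables x, y, if [λx A]D ~ [λy B]D for every term D, then λx A ~ λy B. -/
import Mathlib


inductive Term (V : Type) : Type
  | var : V → Term V
  | app : Term V → Term V → Term V
  | lam : V → Term V → Term V

namespace Term

variable {V : Type}

/-- Structural conditions: `R` is an equivalence relation compatible with
abstraction and application. -/
def IsCongr (R : Term V → Term V → Prop) : Prop :=
  Equivalence R ∧
  (∀ (x : V) (A B : Term V), R A B → R (lam x A) (lam x B)) ∧
  (∀ (A B C D : Term V), R A B → R C D → R (app A C) (app B D))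

/-- Prelambda congruence: congruence satisfying the beta conditions (β1)–(β5). -/
def IsPrelambda (R : Term V → Term V → Prop) : Prop :=
  IsCongr R ∧
  (∀ (x : V) (D : Term V), R (app (lam x (var x)) D) D) ∧
  (∀ (x y : V) (D : Term V), x ≠ y → R (app (lam x (var y)) D) (var y)) ∧
  (∀ (x : V) (A B D : Term V),
    R (app (lam x (app A B)) D) (app (app (lam x A) D) (app (lam x B) D))) ∧
  (∀ (x : V) (A D : Term V), R (app (lam x (lam x A)) D) (lam x A)) ∧
  (∀ (x y : V) (A D : Term V), x ≠ y → R (app (lam y D) (var x)) D →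
    R (app (lam x (lam y A)) D) (lam y (app (lam x A) D)))

/-- The set of variables of which `A` is independent in `R`. -/
def ind (R : Term V → Term V → Prop) (A : Term V) : Set V :=
  {x | ∃ z : V, x ≠ z ∧ R (app (lam x A) (var z)) A}

/-- The set of variables not occurring free in a term. -/
def nonFree : Term V → Set V
  | var x => {x}ᶜ
  | app B C => nonFree B ∩ nonFree C
  | lam x B => nonFree B ∪ {x}

/-- The set of variables not occurring bound in a term. -/
def nonBound : Term V → Set V
  | var _ => Set.univ
  | app B C => nonBound B ∩ nonBound C
  | lam x B => nonBound B \ {x}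

/-- Substitution `⟨D/x⟩(A)` (Barendregt's dissertation style). -/
def subst [DecidableEq V] (D : Term V) (x : V) : Term V → Term V
  | var y => if x = y then D else var y
  | app B C => app (subst D x B) (subst D x C)
  | lam y B => if x = y then lam y B else lam y (subst D x B)

/-- Lambda congruence: prelambda congruence satisfying (αe). -/
def IsLambdaCongr (R : Term V → Term V → Prop) : Prop :=
  IsPrelambda R ∧
  (∀ (x y : V) (A : Term V), R (app (lam y A) (var x)) A →
    R (lam x A) (lam y (app (lam x A) (var y))))

/-- Extensional congruence: prelambda congruence satisfying (ηe). -/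
def IsExtCongr (R : Term V → Term V → Prop) : Prop :=
  IsPrelambda R ∧
  (∀ x y : V, x ≠ y → R (var y) (lam x (app (var y) (var x))))

/-- Lambda theory: congruence satisfying (β) and (α). -/
def IsLambdaTheory [DecidableEq V] (R : Term V → Term V → Prop) : Prop :=
  IsCongr R ∧
  (∀ (x : V) (A D : Term V), nonBound A ∪ nonFree D = Set.univ →
    R (app (lam x A) D) (subst D x A)) ∧
  (∀ (x y : V) (A : Term V), y ∈ nonFree A ∩ nonBound A →
    R (lam x A) (lam y (subst (var y) x A)))

end Term

open Term in
def allVars {V : Type} [DecidableEq V] : Term V → Finset V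
  | .var x => {x}
  | .app A B => allVars A ∪ allVars B
  | .lam x A => insert x (allVars A)

open Term in
theorem aux_L0 {V : Type} [DecidableEq V] {R : Term V → Term V → Prop}
    (hR : IsPrelambda R) :
    ∀ (A : Term V) (z w : V), z ≠ w → z ∉ allVars A → w ∉ allVars A →
      R (app (lam z A) (var w)) A := by
  obtain ⟨⟨heq, hxi, happ⟩, b1, b2, b3, b4, b5⟩ := hR
  intro A
  induction A with
  | var v =>
    intro z w _ hz _
    simp [allVars] at hz
    exact b2 z v (var w) hz
  | app B C ihB ihC =>
    intro z w hzw hz hw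
    simp [allVars] at hz hw
    exact heq.trans (b3 z B C (var w))
      (happ _ _ _ _ (ihB z w hzw hz.1 hw.1) (ihC z w hzw hz.2 hw.2))
  | lam v B ih =>
    intro z w hzw hz hw
    simp [allVars] at hz hw
    refine heq.trans (b5 z v B (var w) hz.1 (b2 v w (var z) (Ne.symm hw.1))) ?_
    exact hxi v _ _ (ih z w hzw hz.2 hw.2)

open Term in
theorem aux_L1 {V : Type} {R : Term V → Term V → Prop}
    (hR : IsPrelambda R) {A : Term V} {z w : V} (hzw : z ≠ w)
    (h : R (app (lam z A) (var w)) A) (D : Term V) :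
    R (app (lam z A) D) A := by
  obtain ⟨⟨heq, hxi, happ⟩, b1, b2, b3, b4, b5⟩ := hR
  have h1 : R (app (lam z A) D) (app (lam z (app (lam z A) (var w))) D) :=
    happ _ _ _ _ (hxi z _ _ (heq.symm h)) (heq.refl D)
  have h2 : R (app (lam z (app (lam z A) (var w))) D)
      (app (app (lam z (lam z A)) D) (app (lam z (var w)) D)) := b3 z _ _ D
  have h3 : R (app (app (lam z (lam z A)) D) (app (lam z (var w)) D))
      (app (lam z A) (var w)) := happ _ _ _ _ (b4 z A D) (b2 z w D hzw)
  exact heq.trans h1 (heq.trans h2 (heq.trans h3 h))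

open Term
theorem stmt10 {V : Type} [Infinite V] [DecidableEq V]
    (R : Term V → Term V → Prop) (hR : IsPrelambda R) :
    IsLambdaCongr R ↔
      (∀ (x y : V) (A B : Term V),
        (∀ D : Term V, R (Term.app (Term.lam x A) D) (Term.app (Term.lam y B) D)) →
        R (Term.lam x A) (Term.lam y B)) := by
  obtain ⟨⟨heq, hxi, happ⟩, b1, b2, b3, b4, b5⟩ := hR
  have hR' : IsPrelambda R := ⟨⟨heq, hxi, happ⟩, b1, b2, b3, b4, b5⟩
  constructor
  · rintro ⟨-, hαe⟩ x y A B hext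
    obtain ⟨z, hz⟩ := Infinite.exists_notMem_finset
      (allVars A ∪ allVars B ∪ {x, y})
    obtain ⟨w, hw⟩ := Infinite.exists_notMem_finset
      (allVars A ∪ allVars B ∪ {x, y, z})
    have hzA : z ∉ allVars A := fun hh => hz (by simp [hh])
    have hzB : z ∉ allVars B := fun hh => hz (by simp [hh])
    have hwA : w ∉ allVars A := fun hh => hw (by simp [hh])
    have hwB : w ∉ allVars B := fun hh => hw (by simp [hh])
    have hzw : z ≠ w := fun hh => hw (by simp [← hh])
    -- rename A to z
    have hA0 : R (app (lam z A) (var w)) A :=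
      aux_L0 hR' A z w hzw hzA hwA
    have hAx : R (app (lam z A) (var x)) A := aux_L1 hR' hzw hA0 (var x)
    have hA : R (lam x A) (lam z (app (lam x A) (var z))) := hαe x z A hAx
    have hB0 : R (app (lam z B) (var w)) B :=
      aux_L0 hR' B z w hzw hzB hwB
    have hBy : R (app (lam z B) (var y)) B := aux_L1 hR' hzw hB0 (var y)
    have hB : R (lam y B) (lam z (app (lam y B) (var z))) := hαe y z B hBy
    exact heq.trans hA (heq.trans (hxi z _ _ (hext (var z))) (heq.symm hB))
  · intro hext
    refine ⟨hR', fun x y A h => ?_⟩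
    by_cases hxy : x = y
    · subst hxy
      exact hxi x _ _ (heq.symm h)
    · have hy : ∀ D, R (app (lam y A) D) A := aux_L1 hR' (Ne.symm hxy) h
      obtain ⟨z, hz⟩ := Infinite.exists_notMem_finset ({x, y} : Finset V)
      simp [not_or] at hz
      have hlz : R (app (lam y (lam x A)) (var z)) (lam x A) := by
        refine heq.trans (b5 y x A (var z) (Ne.symm hxy)
          (b2 x z (var y) (Ne.symm hz.1))) (hxi x _ _ (hy (var z)))
      have hly : ∀ D, R (app (lam y (lam x A)) D) (lam x A) :=
        aux_L1 hR' (fun hh => hz.2 hh.symm) hlz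
      refine hext x y A (app (lam x A) (var y)) (fun D => heq.symm ?_)
      refine heq.trans (b3 y (lam x A) (var y) D) ?_
      exact happ _ _ _ _ (hly D) (b1 y D)
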